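/- The function Λ(ξ) = ξ·√(tanh ξ / ξ) is strictly concave on (0, ∞), i.e., Λ''(ξ) < 0 for all ξ > 0. -/

import Mathlib

open Real Filter Topology

/-- The Whitham dispersion relation, `Λ ξ = ξ * √(tanh ξ / ξ)`. -/
noncomputable def Lam (ξ : ℝ) : ℝ := ξ * Real.sqrt (Real.tanh ξ / ξ)

/-!
For `ξ > 0` we have `Λ ξ = √f(ξ)` with `f ξ = ξ tanh ξ`, and `(√f)'' < 0` exactly when
`2 f f'' < f'²`. Writing `t = tanh ξ`, this reads
`4 t (ξ(1 - t²)) (1 - ξ t) < (t + ξ(1 - t²))²`, which follows from AM-GM for the two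
positive summands on the right together with `ξ t > 0`.
-/

namespace Real

theorem hasDerivAt_tanh (x : ℝ) : HasDerivAt tanh (1 - tanh x ^ 2) x := by
  have hcosh : cosh x ≠ 0 := (cosh_pos x).ne'
  have h := (hasDerivAt_sinh x).div (hasDerivAt_cosh x) hcosh
  rw [show sinh / cosh = tanh by funext y; rw [Pi.div_apply, tanh_eq_sinh_div_cosh]] at h
  refine h.congr_deriv ?_
  rw [tanh_eq_sinh_div_cosh]
  field_simp

theorem tanh_pos {x : ℝ} (hx : 0 < x) : 0 < tanh x := by
  rw [tanh_eq_sinh_div_cosh]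
  exact div_pos (sinh_pos_iff.mpr hx) (cosh_pos x)

end Real

theorem deriv_deriv_sqrt_neg {f f' : ℝ → ℝ} {f'' x : ℝ}
    (hf : ∀ᶠ y in 𝓝 x, HasDerivAt f (f' y) y ∧ 0 < f y) (hf' : HasDerivAt f' f'' x)
    (h : 2 * f x * f'' < f' x ^ 2) : deriv (deriv fun y => √(f y)) x < 0 := by
  have hderiv : deriv (fun y => √(f y)) =ᶠ[𝓝 x] fun y => f' y / (2 * √(f y)) := by
    filter_upwards [hf] with y ⟨hfy, hpos⟩ using (hfy.sqrt hpos.ne').deriv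
  obtain ⟨hfx, hpos⟩ := hf.self_of_nhds
  have hsqrt : 0 < √(f x) := sqrt_pos.mpr hpos
  have hquot : HasDerivAt (fun y => f' y / (2 * √(f y)))
      ((f'' * (2 * √(f x)) - f' x * (2 * (f' x / (2 * √(f x))))) / (2 * √(f x)) ^ 2) x :=
    hf'.div ((hfx.sqrt hpos.ne').const_mul 2) (by positivity)
  rw [hderiv.deriv_eq, hquot.deriv]
  have hnum : f'' * (2 * √(f x)) - f' x * (2 * (f' x / (2 * √(f x))))
      = (2 * f x * f'' - f' x ^ 2) / √(f x) := by
    field_simp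
    rw [sq_sqrt hpos.le]
  rw [hnum]
  exact div_neg_of_neg_of_pos (div_neg_of_neg_of_pos (by linarith) hsqrt) (by positivity)

theorem four_mul_mul_mul_one_sub_lt_sq_add {a b c : ℝ} (ha : 0 < a) (hb : 0 < b) (hc : 0 < c) :
    4 * a * b * (1 - c) < (a + b) ^ 2 := by
  nlinarith [sq_nonneg (a - b), mul_pos (mul_pos ha hb) hc]

theorem Lam_eq_sqrt_mul_tanh {x : ℝ} (hx : 0 ≤ x) : Lam x = √(x * tanh x) := by
  rw [Lam, ← sqrt_sq hx, ← sqrt_mul (sq_nonneg x), sqrt_sq hx]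
  rcases hx.eq_or_lt with rfl | hx
  · simp
  · field_simp

theorem hasDerivAt_mul_tanh (x : ℝ) :
    HasDerivAt (fun y => y * tanh y) (tanh x + x * (1 - tanh x ^ 2)) x := by
  simpa using (hasDerivAt_id' x).fun_mul (hasDerivAt_tanh x)

theorem hasDerivAt_deriv_mul_tanh (x : ℝ) :
    HasDerivAt (fun y => tanh y + y * (1 - tanh y ^ 2))
      (2 * (1 - tanh x ^ 2) * (1 - x * tanh x)) x := by
  have h := (hasDerivAt_tanh x).fun_add
    ((hasDerivAt_id' x).fun_mul (((hasDerivAt_tanh x).fun_pow 2).const_sub 1))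
  refine h.congr_deriv ?_
  ring

/-- `Λ` is strictly concave on `(0, ∞)`: `Λ''(ξ) < 0` for all `ξ > 0`. -/
theorem deriv2_Lam_neg : ∀ ξ : ℝ, 0 < ξ → deriv (deriv Lam) ξ < 0 := by
  intro ξ hξ
  have hLam : Lam =ᶠ[𝓝 ξ] fun x => √(x * tanh x) := by
    filter_upwards [eventually_gt_nhds hξ] with x hx using Lam_eq_sqrt_mul_tanh hx.le
  rw [hLam.deriv.deriv_eq]
  refine deriv_deriv_sqrt_neg ?_ (hasDerivAt_deriv_mul_tanh ξ) ?_
  · filter_upwards [eventually_gt_nhds hξ] with x hx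
    exact ⟨hasDerivAt_mul_tanh x, mul_pos hx (tanh_pos hx)⟩
  · have ht := tanh_pos hξ
    have h := four_mul_mul_mul_one_sub_lt_sq_add ht
      (mul_pos hξ (sub_pos.mpr (tanh_sq_lt_one ξ))) (mul_pos hξ ht)
    linear_combination h
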